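/- Suppose for each k = 1,…,m, Z_k(i,j) for i,j ≥ 0 is constructed by the recursion Z_k(0,0) = ε_k(0,0); Z_k(i,0) = α_k(i) Z_k(i-1,0) + √(1-α_k(i)²) ε_k(i,0); Z_k(0,j) = β_k(j) Z_k(0,j-1) + √(1-β_k(j)²) ε_k(0,j); and Z_k(i,j) = α_k(i) Z_k(i-1,j) + β_k(j) Z_k(i,j-1) - α_k(i)β_k(j) Z_k(i-1,j-1) + √(1-α_k(i)²)√(1-β_k(j)²) ε_k(i,j), where the ε_k(i,j) are i.i.d. standard normal and α_k(i), β_k(j) ∈ (0,1). Then each Z_k(i,j) is standard normal and Cov(Z_k(i,j), Z_k(i',j')) = ∏_{l=min(i,i')+1}^{max(i,i')} α_k(l) · ∏_{l=min(j,j')+1}^{max(j,j')} β_k(l). -/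

import Mathlib

/-!
The recursion is linear and separable: `Z(i,j) = ∑_{p,q} a_i(p) b_j(q) ε(p,q)`, where
`a_i(p) = arCoeff α i p` is the weight of `x_p` in the one-dimensional AR(1) process
`Y_0 = x_0`, `Y_i = α_i Y_{i-1} + √(1 - α_i²) x_i`, and `b_j(q) = arCoeff β j q`. A linear
combination of independent standard normals is normal with variance the sum of the squared
weights, and its covariance with another one is the dot product of the weights. Both sums factor
over `p` and `q`, and the one-dimensional sums are `∑_p a_i(p)² = 1` and, for `i ≤ i'`,
`∑_p a_i(p) a_{i'}(p) = ∏_{i<l≤i'} α_l`, since `a_{i'} = (∏_{i<l≤i'} α_l) a_i` on the support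
of `a_i`.
-/

open MeasureTheory ProbabilityTheory Finset
open scoped NNReal

namespace ProbabilityTheory

variable {Ω ι : Type*} {mΩ : MeasurableSpace Ω} {P : Measure Ω} {X : ι → Ω → ℝ}

lemma HasLaw.memLp_two_of_gaussianReal {Y : Ω → ℝ} {m : ℝ} {v : ℝ≥0}
    (h : HasLaw Y (gaussianReal m v) P) : MemLp Y 2 P := by
  have := memLp_id_gaussianReal (μ := m) (v := v) 2
  rwa [← h.map_eq, memLp_map_measure_iff aestronglyMeasurable_id h.aemeasurable] at this

lemma iIndepFun.hasLaw_fun_sum_gaussianReal [IsProbabilityMeasure P] {m : ι → ℝ} {v : ι → ℝ≥0}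
    (hmeas : ∀ i, Measurable (X i)) (hlaw : ∀ i, HasLaw (X i) (gaussianReal (m i) (v i)) P)
    (hind : iIndepFun X P) (s : Finset ι) :
    HasLaw (fun ω ↦ ∑ i ∈ s, X i ω) (gaussianReal (∑ i ∈ s, m i) (∑ i ∈ s, v i)) P := by
  classical
  induction s using Finset.induction_on with
  | empty => exact ⟨aemeasurable_const, by simp [gaussianReal_zero_var]⟩
  | insert a s ha ih =>
    simp_rw [sum_insert ha]
    have hindep : IndepFun (X a) (fun ω ↦ ∑ i ∈ s, X i ω) P := by
      simpa [Finset.sum_fn] using (hind.indepFun_finsetSum_of_notMem hmeas ha).symm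
    simpa [gaussianReal_conv_gaussianReal] using hindep.hasLaw_fun_add (hlaw a) ih

lemma iIndepFun.hasLaw_fun_sum_mul_gaussianReal [IsProbabilityMeasure P]
    (hmeas : ∀ i, Measurable (X i)) (hlaw : ∀ i, HasLaw (X i) (gaussianReal 0 1) P)
    (hind : iIndepFun X P) (c : ι → ℝ) (s : Finset ι) :
    HasLaw (fun ω ↦ ∑ i ∈ s, c i * X i ω) (gaussianReal 0 (∑ i ∈ s, c i ^ 2).toNNReal) P := by
  have h := iIndepFun.hasLaw_fun_sum_gaussianReal (X := fun i ω ↦ c i * X i ω)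
    (fun i ↦ (hmeas i).const_mul (c i)) (fun i ↦ gaussianReal_const_mul (hlaw i) (c i))
    (hind.comp (fun i x ↦ c i * x) fun i ↦ measurable_const_mul (c i)) s
  have hv : ∑ i ∈ s, NNReal.mk (c i ^ 2) (sq_nonneg _) * 1 = (∑ i ∈ s, c i ^ 2).toNNReal := by
    ext; simp [sum_nonneg fun i _ ↦ sq_nonneg (c i)]
  rw [hv] at h
  simpa using h

lemma iIndepFun.integral_mul_eq_ite [DecidableEq ι]
    (hlaw : ∀ i, HasLaw (X i) (gaussianReal 0 1) P) (hind : iIndepFun X P) (i j : ι) :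
    ∫ ω, X i ω * X j ω ∂P = if i = j then 1 else 0 := by
  split_ifs with hij
  · subst hij
    have hvar := variance_of_integral_eq_zero (hlaw i).aemeasurable
      (by simp [(hlaw i).integral_eq, integral_id_gaussianReal])
    rw [(hlaw i).variance_eq, variance_id_gaussianReal] at hvar
    simpa [sq] using hvar.symm
  · rw [(hind.indepFun hij).integral_fun_mul_eq_mul_integral
      (hlaw i).aemeasurable.aestronglyMeasurable (hlaw j).aemeasurable.aestronglyMeasurable]
    simp [(hlaw i).integral_eq, integral_id_gaussianReal]

lemma iIndepFun.integral_sum_mul_sum [DecidableEq ι]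
    (hlaw : ∀ i, HasLaw (X i) (gaussianReal 0 1) P) (hind : iIndepFun X P) (c d : ι → ℝ)
    (s : Finset ι) :
    ∫ ω, (∑ i ∈ s, c i * X i ω) * (∑ j ∈ s, d j * X j ω) ∂P = ∑ i ∈ s, c i * d i := by
  have hint : ∀ i j, Integrable (fun ω ↦ X i ω * X j ω) P := fun i j ↦
    (hlaw i).memLp_two_of_gaussianReal.integrable_mul (hlaw j).memLp_two_of_gaussianReal
  have hexpand : ∀ ω, (∑ i ∈ s, c i * X i ω) * (∑ j ∈ s, d j * X j ω)
      = ∑ i ∈ s, ∑ j ∈ s, c i * d j * (X i ω * X j ω) := fun ω ↦ by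
    rw [sum_mul_sum]
    exact sum_congr rfl fun i _ ↦ sum_congr rfl fun j _ ↦ by ring
  simp_rw [hexpand]
  rw [integral_finsetSum _ fun i _ ↦ integrable_finsetSum _ fun j _ ↦ (hint i j).const_mul _]
  refine sum_congr rfl fun i hi ↦ ?_
  rw [integral_finsetSum _ fun j _ ↦ (hint i j).const_mul _]
  simp [integral_const_mul, hind.integral_mul_eq_ite hlaw, hi]

end ProbabilityTheory

noncomputable def arCoeff (α : ℕ → ℝ) : ℕ → ℕ → ℝ
  | 0, p => if p = 0 then 1 else 0
  | i + 1, p => α (i + 1) * arCoeff α i p + if p = i + 1 then √(1 - α (i + 1) ^ 2) else 0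

namespace arCoeff

variable (α : ℕ → ℝ)

lemma eq_zero_of_lt {i p : ℕ} (h : i < p) : arCoeff α i p = 0 := by
  induction i with
  | zero => simp [arCoeff, h.ne']
  | succ i ih => simp [arCoeff, ih (by omega), h.ne']

lemma sum_zero_mul (N : ℕ) (f : ℕ → ℝ) : ∑ p ∈ range (N + 1), arCoeff α 0 p * f p = f 0 := by
  simp [arCoeff]

lemma sum_succ_mul {i N : ℕ} (hi : i + 1 ≤ N) (f : ℕ → ℝ) :
    ∑ p ∈ range (N + 1), arCoeff α (i + 1) p * f p
      = α (i + 1) * ∑ p ∈ range (N + 1), arCoeff α i p * f p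
        + √(1 - α (i + 1) ^ 2) * f (i + 1) := by
  simp [arCoeff, add_mul, sum_add_distrib, mul_sum, mul_assoc, ite_mul, Nat.lt_succ_iff.mpr hi]

lemma sum_sq (hα : ∀ l, α l ^ 2 ≤ 1) {i N : ℕ} (hi : i ≤ N) :
    ∑ p ∈ range (N + 1), arCoeff α i p ^ 2 = 1 := by
  induction i with
  | zero => simp [arCoeff, sq]
  | succ i ih =>
    have hdiag : arCoeff α (i + 1) (i + 1) = √(1 - α (i + 1) ^ 2) := by
      simp [arCoeff, eq_zero_of_lt α i.lt_succ_self]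
    have hcross : ∑ p ∈ range (N + 1), arCoeff α i p * arCoeff α (i + 1) p = α (i + 1) := by
      simp_rw [mul_comm (arCoeff α i _)]
      rw [sum_succ_mul α hi, eq_zero_of_lt α i.lt_succ_self]
      simp_rw [← sq]
      rw [ih (by omega)]
      ring
    have hs : √(1 - α (i + 1) ^ 2) * √(1 - α (i + 1) ^ 2) = 1 - α (i + 1) ^ 2 :=
      Real.mul_self_sqrt (by linarith [hα (i + 1)])
    simp_rw [sq]
    rw [sum_succ_mul α hi, hcross, hdiag, hs]
    ring

lemma sum_mul_of_le (hα : ∀ l, α l ^ 2 ≤ 1) {i i' N : ℕ} (hii' : i ≤ i') (hi' : i' ≤ N) :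
    ∑ p ∈ range (N + 1), arCoeff α i p * arCoeff α i' p = ∏ l ∈ Ioc i i', α l := by
  induction i', hii' using Nat.le_induction with
  | base => simp [← sq, sum_sq α hα hi']
  | succ i' hii' ih =>
    simp_rw [mul_comm (arCoeff α i _)]
    rw [sum_succ_mul α hi', eq_zero_of_lt α (by omega : i < i' + 1), prod_Ioc_succ_top hii']
    simp_rw [mul_comm (arCoeff α i' _)]
    rw [ih (by omega)]
    ring

lemma sum_mul (hα : ∀ l, α l ^ 2 ≤ 1) {i i' N : ℕ} (hi : i ≤ N) (hi' : i' ≤ N) :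
    ∑ p ∈ range (N + 1), arCoeff α i p * arCoeff α i' p
      = ∏ l ∈ Ioc (min i i') (max i i'), α l := by
  rcases le_total i i' with h | h
  · rw [min_eq_left h, max_eq_right h, sum_mul_of_le α hα h hi']
  · simp_rw [mul_comm (arCoeff α i _)]
    rw [min_eq_right h, max_eq_left h, sum_mul_of_le α hα h hi]

end arCoeff

section SpatialAR

variable {Ω : Type*}

structure IsSpatialAR (ε : ℕ × ℕ → Ω → ℝ) (α β : ℕ → ℝ) (Z : ℕ → ℕ → Ω → ℝ) : Prop where
  zero_zero : Z 0 0 = ε (0, 0)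
  succ_zero : ∀ i, Z (i + 1) 0 = fun ω =>
    α (i + 1) * Z i 0 ω + √(1 - α (i + 1) ^ 2) * ε (i + 1, 0) ω
  zero_succ : ∀ j, Z 0 (j + 1) = fun ω =>
    β (j + 1) * Z 0 j ω + √(1 - β (j + 1) ^ 2) * ε (0, j + 1) ω
  succ_succ : ∀ i j, Z (i + 1) (j + 1) = fun ω =>
    α (i + 1) * Z i (j + 1) ω + β (j + 1) * Z (i + 1) j ω - α (i + 1) * β (j + 1) * Z i j ω
      + √(1 - α (i + 1) ^ 2) * √(1 - β (j + 1) ^ 2) * ε (i + 1, j + 1) ω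

namespace IsSpatialAR

variable {ε : ℕ × ℕ → Ω → ℝ} {α β : ℕ → ℝ} {Z : ℕ → ℕ → Ω → ℝ}

lemma apply_eq_sum_arCoeff_mul_sum (hZ : IsSpatialAR ε α β Z) {N M i j : ℕ} (hi : i ≤ N)
    (hj : j ≤ M) (ω : Ω) :
    Z i j ω = ∑ p ∈ range (N + 1), arCoeff α i p *
      ∑ q ∈ range (M + 1), arCoeff β j q * ε (p, q) ω := by
  induction i generalizing j with
  | zero =>
    induction j with
    | zero => simp [hZ.zero_zero, arCoeff.sum_zero_mul]
    | succ j ihj =>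
      rw [hZ.zero_succ]
      beta_reduce
      rw [ihj (by omega), arCoeff.sum_zero_mul, arCoeff.sum_zero_mul, arCoeff.sum_succ_mul β hj]
  | succ i ihi =>
    induction j with
    | zero =>
      rw [hZ.succ_zero]
      beta_reduce
      rw [arCoeff.sum_succ_mul α hi, ihi (by omega) hj, arCoeff.sum_zero_mul]
    | succ j ihj =>
      have hrow : Z (i + 1) j ω = α (i + 1) * Z i j ω
          + √(1 - α (i + 1) ^ 2) * ∑ q ∈ range (M + 1), arCoeff β j q * ε (i + 1, q) ω := by
        rw [ihj (by omega), arCoeff.sum_succ_mul α hi, ihi (by omega) (by omega)]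
      rw [hZ.succ_succ]
      beta_reduce
      rw [arCoeff.sum_succ_mul α hi, ← ihi (by omega) hj, arCoeff.sum_succ_mul β hj]
      linear_combination β (j + 1) * hrow

lemma eq_sum_product (hZ : IsSpatialAR ε α β Z) {N M i j : ℕ} (hi : i ≤ N) (hj : j ≤ M) :
    Z i j = fun ω ↦ ∑ u ∈ range (N + 1) ×ˢ range (M + 1),
      arCoeff α i u.1 * arCoeff β j u.2 * ε u ω := by
  funext ω
  rw [hZ.apply_eq_sum_arCoeff_mul_sum hi hj, sum_product]
  simp_rw [mul_sum, mul_assoc]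

end IsSpatialAR

end SpatialAR

/-- Spatial autoregressive construction: with i.i.d. standard normal
innovations `ε(i,j)` and coefficients `α(i), β(j) ∈ (0,1)`, the recursively
defined field `Z(i,j)` is standard normal with the direct-product covariance
`Cov(Z(i,j), Z(i',j')) = ∏_{min(i,i')<l≤max(i,i')} α(l) ·
∏_{min(j,j')<l≤max(j,j')} β(l)`. -/
theorem spatial_AR_standard_normal_product_cov {Ω : Type*} [MeasurableSpace Ω]
    (μ : Measure Ω) [IsProbabilityMeasure μ]
    (ε : ℕ × ℕ → Ω → ℝ) (hεmeas : ∀ q, Measurable (ε q))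
    (hεlaw : ∀ q, Measure.map (ε q) μ = gaussianReal 0 1)
    (hεindep : iIndepFun ε μ)
    (α β : ℕ → ℝ) (hα : ∀ i, α i ∈ Set.Ioo (0 : ℝ) 1)
    (hβ : ∀ j, β j ∈ Set.Ioo (0 : ℝ) 1)
    (Z : ℕ → ℕ → Ω → ℝ)
    (hZ00 : Z 0 0 = ε (0, 0))
    (hZi0 : ∀ i, Z (i + 1) 0 = fun ω =>
      α (i + 1) * Z i 0 ω + Real.sqrt (1 - α (i + 1) ^ 2) * ε (i + 1, 0) ω)
    (hZ0j : ∀ j, Z 0 (j + 1) = fun ω =>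
      β (j + 1) * Z 0 j ω + Real.sqrt (1 - β (j + 1) ^ 2) * ε (0, j + 1) ω)
    (hZij : ∀ i j, Z (i + 1) (j + 1) = fun ω =>
      α (i + 1) * Z i (j + 1) ω + β (j + 1) * Z (i + 1) j ω
        - α (i + 1) * β (j + 1) * Z i j ω
        + Real.sqrt (1 - α (i + 1) ^ 2) * Real.sqrt (1 - β (j + 1) ^ 2) *
            ε (i + 1, j + 1) ω) :
    (∀ i j, Measure.map (Z i j) μ = gaussianReal 0 1) ∧
    (∀ i j i' j', ∫ ω, Z i j ω * Z i' j' ω ∂μ =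
      (∏ l ∈ Finset.Ioc (min i i') (max i i'), α l) *
      (∏ l ∈ Finset.Ioc (min j j') (max j j'), β l)) := by
  have hZ : IsSpatialAR ε α β Z := ⟨hZ00, hZi0, hZ0j, hZij⟩
  have hα' : ∀ l, α l ^ 2 ≤ 1 := fun l ↦ pow_le_one₀ (hα l).1.le (hα l).2.le
  have hβ' : ∀ l, β l ^ 2 ≤ 1 := fun l ↦ pow_le_one₀ (hβ l).1.le (hβ l).2.le
  have hεlaw' : ∀ u, HasLaw (ε u) (gaussianReal 0 1) μ := fun u ↦
    ⟨(hεmeas u).aemeasurable, hεlaw u⟩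
  refine ⟨fun i j ↦ ?_, fun i j i' j' ↦ ?_⟩
  · have h := hεindep.hasLaw_fun_sum_mul_gaussianReal hεmeas hεlaw'
      (fun u ↦ arCoeff α i u.1 * arCoeff β j u.2) (range (i + 1) ×ˢ range (j + 1))
    have hvar : ∑ u ∈ range (i + 1) ×ˢ range (j + 1), (arCoeff α i u.1 * arCoeff β j u.2) ^ 2
        = 1 := by
      simp only [sum_product, mul_pow, ← sum_mul_sum]
      rw [arCoeff.sum_sq α hα' le_rfl, arCoeff.sum_sq β hβ' le_rfl, one_mul]
    rw [hvar, ← hZ.eq_sum_product le_rfl le_rfl] at h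
    simpa using h.map_eq
  · rw [hZ.eq_sum_product (le_max_left i i') (le_max_left j j'),
      hZ.eq_sum_product (le_max_right i i') (le_max_right j j'),
      hεindep.integral_sum_mul_sum hεlaw']
    simp only [sum_product, mul_mul_mul_comm, ← sum_mul_sum]
    rw [arCoeff.sum_mul α hα' (le_max_left i i') (le_max_right i i'),
      arCoeff.sum_mul β hβ' (le_max_left j j') (le_max_right j j')]
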